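/- arXiv:1905.09656 — 10 statements merged into one kernel-verified Lean document; each statement's English description precedes it below -/
import Mathlib

section
/- For integers t ≥ 1, i ≥ 1, and j with 2t < j < 2t + i, the following product identity holds: (∏_{l=j-2t+1}^{i-1} (2t + 2l)) / (∏_{l=j-2t+1}^{i} (2t + 2l - 1)) = 2^(4t - 2j + 2i - 2) · ((t+i-1)!/(j-t)!)^2 · (2j-2t)!/(2t+2i-1)!. -/
/-!
With `m = j - t` and `n = t + i - 1`, the numerator is `∏_{m < s ≤ n} 2s = 2^(n-m) n!/m!`. The
denominator is the product of the odd numbers `2m+1, …, 2n+1`, i.e. `(2n+1)!/(2m)!` divided by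
the even numbers `2m+2, …, 2n`, whose product is again `2^(n-m) n!/m!`.
-/

open Finset Nat

theorem Finset.prod_Ioc_add_left {M α : Type*} [CommMonoid M] [AddCommMonoid α] [PartialOrder α]
    [IsOrderedCancelAddMonoid α] [ExistsAddOfLE α] [LocallyFiniteOrder α]
    (f : α → M) (a b c : α) : ∏ x ∈ Ioc a b, f (c + x) = ∏ x ∈ Ioc (c + a) (c + b), f x := by
  rw [← map_add_left_Ioc, prod_map]
  rfl

namespace Nat

theorem factorial_mul_prod_Ioc {m n : ℕ} (h : m ≤ n) : m ! * ∏ s ∈ Ioc m n, s = n ! := by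
  induction n, h using Nat.le_induction with
  | base => simp
  | succ n hmn ih => rw [prod_Ioc_succ_top hmn, ← mul_assoc, ih, factorial_succ, mul_comm]

theorem factorial_mul_prod_Ioc_two_mul {m n : ℕ} (h : m ≤ n) :
    m ! * ∏ s ∈ Ioc m n, 2 * s = 2 ^ (n - m) * n ! := by
  rw [prod_mul_distrib, prod_const, card_Ioc, mul_left_comm, factorial_mul_prod_Ioc h]

theorem factorial_two_mul_mul_prod_Ioc {m n : ℕ} (h : m ≤ n) :
    (2 * m)! * ∏ s ∈ Ioc m n, (2 * s - 1) * (2 * s) = (2 * n)! := by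
  induction n, h using Nat.le_induction with
  | base => simp
  | succ n hmn ih =>
    have hodd : 2 * (n + 1) - 1 = 2 * n + 1 := by omega
    rw [prod_Ioc_succ_top hmn, ← mul_assoc, ih, hodd, mul_add_one 2 n, factorial_succ,
      factorial_succ]
    ring

theorem factorial_two_mul_mul_prod_Ioc_two_mul_sub_one {m n : ℕ} (h : m ≤ n) :
    (2 * m)! * (2 ^ (n - m) * n !) * ∏ s ∈ Ioc m n, (2 * s - 1) = m ! * (2 * n)! := by
  have hevens := factorial_mul_prod_Ioc_two_mul h
  have hall := factorial_two_mul_mul_prod_Ioc h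
  rw [prod_mul_distrib] at hall
  rw [← hevens, ← hall]
  ring

theorem prod_Ioc_two_mul_div_prod_Ioc_two_mul_sub_one {m n : ℕ} (h : m ≤ n) :
    ((∏ s ∈ Ioc m n, 2 * s : ℕ) : ℚ) / ((∏ s ∈ Ioc m (n + 1), (2 * s - 1) : ℕ) : ℚ) =
      2 ^ (2 * (n - m)) * ((n ! : ℚ) / m !) ^ 2 * (2 * m)! / (2 * n + 1)! := by
  have hE := factorial_mul_prod_Ioc_two_mul h
  have hO := factorial_two_mul_mul_prod_Ioc_two_mul_sub_one (h.trans n.le_succ)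
  rw [show n + 1 - m = n - m + 1 by omega, mul_add_one 2 n, factorial_succ n,
    factorial_succ (2 * n + 1)] at hO
  set E := ∏ s ∈ Ioc m n, 2 * s
  set O := ∏ s ∈ Ioc m (n + 1), (2 * s - 1)
  qify at hE hO
  have hO' : ((2 * m)! : ℚ) * 2 ^ (n - m) * n ! * O = m ! * (2 * n + 1)! := by
    apply mul_left_cancel₀ (show (2 * (n + 1) : ℚ) ≠ 0 by positivity)
    linear_combination hO
  have hO0 : (O : ℚ) ≠ 0 := by
    refine Nat.cast_ne_zero.mpr (prod_ne_zero_iff.mpr fun s hs => ?_)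
    rw [mem_Ioc] at hs
    omega
  field_simp
  linear_combination (-(E * m ! : ℚ)) * hO' + ((2 * m)! * 2 ^ (n - m) * n ! * O : ℚ) * hE

end Nat

theorem mergeInsertion_prod_identity_second_general (t i j : ℕ)
    (hj₁ : 2 * t < j) (hj₂ : j < 2 * t + i) :
    (∏ l ∈ Finset.Icc (j - 2 * t + 1) (i - 1), ((2 * t + 2 * l : ℕ) : ℚ)) /
        (∏ l ∈ Finset.Icc (j - 2 * t + 1) i, ((2 * t + 2 * l - 1 : ℕ) : ℚ)) =
      2 ^ (4 * t + 2 * i - 2 * j - 2) * (((t + i - 1)! : ℚ) / ((j - t)! : ℚ)) ^ 2 *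
        ((2 * j - 2 * t)! : ℚ) / (((2 * t + 2 * i - 1)!) : ℚ) := by
  obtain ⟨a, rfl⟩ : ∃ a, j = 2 * t + a := ⟨j - 2 * t, by omega⟩
  obtain ⟨k, rfl⟩ : ∃ k, i = a + k + 1 := ⟨i - a - 1, by omega⟩
  have hevens : ∏ l ∈ Icc (a + 1) (a + k), (2 * t + 2 * l) =
      ∏ s ∈ Ioc (t + a) (t + a + k), 2 * s := by
    rw [Icc_add_one_left_eq_Ioc, add_assoc t, ← prod_Ioc_add_left (2 * ·)]
    simp only [mul_add]
  have hodds : ∏ l ∈ Icc (a + 1) (a + k + 1), (2 * t + 2 * l - 1) =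
      ∏ s ∈ Ioc (t + a) (t + a + k + 1), (2 * s - 1) := by
    rw [Icc_add_one_left_eq_Ioc, show t + a + k + 1 = t + (a + k + 1) by ring,
      ← prod_Ioc_add_left (2 * · - 1)]
    simp only [mul_add]
  rw [← Nat.cast_prod, ← Nat.cast_prod, Nat.add_sub_cancel_left, Nat.add_sub_cancel, hevens,
    hodds, prod_Ioc_two_mul_div_prod_Ioc_two_mul_sub_one (Nat.le_add_right _ k),
    show 4 * t + 2 * (a + k + 1) - 2 * (2 * t + a) - 2 = 2 * (t + a + k - (t + a)) by omega,
    show t + (a + k + 1) - 1 = t + a + k by omega, show 2 * t + a - t = t + a by omega,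
    show 2 * (2 * t + a) - 2 * t = 2 * (t + a) by omega,
    show 2 * t + 2 * (a + k + 1) - 1 = 2 * (t + a + k) + 1 by omega]

/-- Product identity used to simplify `P(X_i = j)` for `2t < j < 2t + i` in the
MergeInsertion insertion step:
`(∏_{l=j-2t+1}^{i-1} (2t+2l)) / (∏_{l=j-2t+1}^{i} (2t+2l-1))
  = 2^(4t-2j+2i-2) · ((t+i-1)!/(j-t)!)² · (2j-2t)!/(2t+2i-1)!`. -/
theorem mergeInsertion_prod_identity_second (t i j : ℕ) (ht : 1 ≤ t) (hi : 1 ≤ i)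
    (hj₁ : 2 * t < j) (hj₂ : j < 2 * t + i) :
    (∏ l ∈ Finset.Icc (j - 2 * t + 1) (i - 1), ((2 * t + 2 * l : ℕ) : ℚ)) /
        (∏ l ∈ Finset.Icc (j - 2 * t + 1) i, ((2 * t + 2 * l - 1 : ℕ) : ℚ)) =
      2 ^ (4 * t + 2 * i - 2 * j - 2) * (((t + i - 1)! : ℚ) / ((j - t)! : ℚ)) ^ 2 *
        ((2 * j - 2 * t)! : ℚ) / (((2 * t + 2 * i - 1)!) : ℚ) :=
  mergeInsertion_prod_identity_second_general t i j hj₁ hj₂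
end

section
/- Fix integers t ≥ 1 and i ≥ 1. Define P(i, j) by P(i, j) = 2^(2i-2)·((t+i-1)!/t!)^2·(2t)!/(2t+2i-1)! for 0 ≤ j ≤ 2t, P(i, j) = 2^(4t-2j+2i-2)·((t+i-1)!/(j-t)!)^2·(2j-2t)!/(2t+2i-1)! for 2t < j < 2t+i, and P(i, j) = 0 otherwise. Then for each i ≥ 1, the values P(i, j) sum over all j ≥ 0 to 1. -/
/-!
Writing `c n = centralBinom n / 4 ^ n` and `N = t + i - 1`, every nonzero value of `P` has the
form `c a / ((2N + 1) c N)`, with `a = t` on the first `2t + 1` positions and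
`a = t + 1, …, N` on the remaining ones. The recurrence `(2n + 2) c (n + 1) = (2n + 1) c n`
makes `(2t + 1) c t + c (t + 1) + ⋯ + c N` telescope to `(2N + 1) c N`.
-/

open Nat

noncomputable def centralBinomRatio (n : ℕ) : ℝ := (centralBinom n : ℝ) / 4 ^ n

lemma centralBinomRatio_pos (n : ℕ) : 0 < centralBinomRatio n := by
  unfold centralBinomRatio
  have := centralBinom_pos n
  positivity

lemma centralBinomRatio_eq_factorial (n : ℕ) :
    centralBinomRatio n = (2 * n)! / (4 ^ n * (n ! : ℝ) ^ 2) := by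
  rw [centralBinomRatio, centralBinom_eq_two_mul_choose, Nat.cast_choose ℝ (by omega),
    show 2 * n - n = n by omega]
  ring

lemma two_mul_add_two_mul_centralBinomRatio_succ (n : ℕ) :
    (2 * n + 2) * centralBinomRatio (n + 1) = (2 * n + 1) * centralBinomRatio n := by
  have h : ((n + 1) * centralBinom (n + 1) : ℝ) = 2 * (2 * n + 1) * centralBinom n := by
    exact_mod_cast succ_mul_centralBinom_succ n
  simp only [centralBinomRatio, pow_succ]
  field_simp
  linarith

lemma two_mul_add_one_mul_centralBinomRatio_add_sum (t k : ℕ) :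
    (2 * t + 1) * centralBinomRatio t + ∑ m ∈ Finset.range k, centralBinomRatio (t + 1 + m) =
      (2 * (t + k : ℕ) + 1) * centralBinomRatio (t + k) := by
  induction k with
  | zero => simp
  | succ k ih =>
    have h := two_mul_add_two_mul_centralBinomRatio_succ (t + k)
    rw [Finset.sum_range_succ, ← add_assoc, ih, add_right_comm t 1 k, ← add_assoc]
    push_cast at h ⊢
    linarith

lemma pow_mul_factorial_div_sq_eq_centralBinomRatio_div {a n : ℕ} (h : a ≤ n) :
    (2 : ℝ) ^ (2 * (n - a)) * ((n ! : ℝ) / a !) ^ 2 * (2 * a)! / (2 * n + 1)! =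
      centralBinomRatio a / ((2 * n + 1) * centralBinomRatio n) := by
  obtain ⟨d, rfl⟩ := Nat.exists_eq_add_of_le h
  rw [centralBinomRatio_eq_factorial, centralBinomRatio_eq_factorial, factorial_succ,
    show a + d - a = d by omega, pow_mul, mul_add, pow_add]
  have := factorial_pos a
  have := factorial_pos (2 * a + 2 * d)
  push_cast
  field_simp
  ring

theorem mergeInsertion_Xi_dist_sums_to_one_general (t i : ℕ) (hi : 1 ≤ i)
    (P : ℕ → ℝ)
    (hP : ∀ j : ℕ, P j =
      if j ≤ 2 * t then
        2 ^ (2 * i - 2) * (((t + i - 1)! : ℝ) / (t ! : ℝ)) ^ 2 *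
          ((2 * t)! : ℝ) / ((2 * t + 2 * i - 1)! : ℝ)
      else if j < 2 * t + i then
        2 ^ (4 * t + 2 * i - 2 * j - 2) * (((t + i - 1)! : ℝ) / ((j - t)! : ℝ)) ^ 2 *
          ((2 * j - 2 * t)! : ℝ) / ((2 * t + 2 * i - 1)! : ℝ)
      else 0) :
    ∑' j : ℕ, P j = 1 := by
  obtain ⟨k, rfl⟩ : ∃ k, i = k + 1 := ⟨i - 1, by omega⟩
  set D := (2 * (t + k : ℕ) + 1) * centralBinomRatio (t + k)
  have hD : D ≠ 0 := by have := centralBinomRatio_pos (t + k); positivity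
  have hP_low : ∀ j ≤ 2 * t, P j = centralBinomRatio t / D := by
    intro j hj
    rw [hP, if_pos hj, ← pow_mul_factorial_div_sq_eq_centralBinomRatio_div (n := t + k) (by omega)]
    congr <;> omega
  have hP_high : ∀ m < k, P (2 * t + 1 + m) = centralBinomRatio (t + 1 + m) / D := by
    intro m hm
    rw [hP, if_neg (by omega), if_pos (by omega),
      ← pow_mul_factorial_div_sq_eq_centralBinomRatio_div (n := t + k) (by omega)]
    congr <;> omega
  have hP_zero : ∀ j ∉ Finset.range (2 * t + 1 + k), P j = 0 := by
    intro j hj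
    rw [Finset.mem_range] at hj
    rw [hP, if_neg (by omega), if_neg (by omega)]
  rw [tsum_eq_sum hP_zero, Finset.sum_range_add,
    Finset.sum_congr rfl fun j hj => hP_low j (by rw [Finset.mem_range] at hj; omega),
    Finset.sum_congr rfl fun m hm => hP_high m (Finset.mem_range.mp hm),
    Finset.sum_const, Finset.card_range, nsmul_eq_mul, ← Finset.sum_div, mul_div_assoc',
    ← add_div, div_eq_one_iff_eq hD]
  simp only [D]
  exact_mod_cast two_mul_add_one_mul_centralBinomRatio_add_sum t k

/-- The probabilities `P(X_i = j)` from Theorem 1 of the paper (position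
distribution when inserting `b_{t+i}` during one batch of MergeInsertion,
`t = t_{k-1}`) sum to `1` over all `j ≥ 0`. -/
theorem mergeInsertion_Xi_dist_sums_to_one (t i : ℕ) (ht : 1 ≤ t) (hi : 1 ≤ i)
    (P : ℕ → ℝ)
    (hP : ∀ j : ℕ, P j =
      if j ≤ 2 * t then
        2 ^ (2 * i - 2) * (((t + i - 1)! : ℝ) / (t ! : ℝ)) ^ 2 *
          ((2 * t)! : ℝ) / ((2 * t + 2 * i - 1)! : ℝ)
      else if j < 2 * t + i then
        2 ^ (4 * t + 2 * i - 2 * j - 2) * (((t + i - 1)! : ℝ) / ((j - t)! : ℝ)) ^ 2 *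
          ((2 * j - 2 * t)! : ℝ) / ((2 * t + 2 * i - 1)! : ℝ)
      else 0) :
    ∑' j : ℕ, P j = 1 :=
  mergeInsertion_Xi_dist_sums_to_one_general t i hi P hP
end

section
/- Fix integers t ≥ 1 and i ≥ 1. Define Q(q, j) = ((2q-j)! / (2^(q-j) · j! · (q-j)!)) · 2^q · (2t+2i+j-1)!/(2t+2i+2q-1)! · (t+i+q-1)!/(t+i-1)! for 0 ≤ j ≤ q, and Q(q, j) = 0 otherwise. Then Q(0, 0) = 1 and for all q ≥ 1 and 0 ≤ j ≤ q, Q(q, j) = ((2t+2i+j-1)/(2t+2i+2q-1)) · Q(q-1, j-1) + ((2q-j-1)/(2t+2i+2q-1)) · Q(q-1, j). -/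
/-!
Both terms of the recurrence are explicit multiples of `Q(q, j)`: comparing factorials,
`(2s+j-1)·Q(q-1, j-1) = j/(2q-j) · (2s+2q-1)·Q(q, j)` and
`(2q-j-1)·Q(q-1, j) = 2(q-j)/(2q-j) · (2s+2q-1)·Q(q, j)`, where `s = t + i`.
The weights `j` and `2(q-j)` add up to `2q-j`, which gives the recurrence; at the boundary
`j = 0` or `j = q` the vanishing weight matches the vanishing value of `Q` outside `0 ≤ j ≤ q`.
-/

open Nat

/-- `Q(q, j)` with `s = t + i`. -/
noncomputable def closedForm (s q j : ℕ) : ℝ :=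
  ((2 * q - j)! : ℝ) / (2 ^ (q - j) * (j ! : ℝ) * ((q - j)! : ℝ)) *
    2 ^ q * ((2 * s + j - 1)! : ℝ) / ((2 * s + 2 * q - 1)! : ℝ) *
    ((s + q - 1)! : ℝ) / ((s - 1)! : ℝ)

noncomputable def closedFormExt (s q : ℕ) (j : ℤ) : ℝ :=
  if 0 ≤ j ∧ j ≤ (q : ℤ) then closedForm s q j.toNat else 0

lemma closedForm_zero_zero (s : ℕ) : closedForm s 0 0 = 1 := by
  simp [closedForm, Nat.factorial_ne_zero]

/-- For `s ≥ 1` and `j ≤ q` none of the natural subtractions in `closedForm` truncates. -/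
lemma closedForm_succ_add (s m r : ℕ) :
    closedForm (s + 1) (m + r) m =
      (m + 2 * r)! * 2 ^ m * (2 * s + m + 1)! * (s + m + r)! /
        (m ! * r ! * (2 * s + 2 * m + 2 * r + 1)! * s !) := by
  rw [closedForm, show 2 * (m + r) - m = m + 2 * r by omega, Nat.add_sub_cancel_left,
    show 2 * (s + 1) + m - 1 = 2 * s + m + 1 by omega,
    show 2 * (s + 1) + 2 * (m + r) - 1 = 2 * s + 2 * m + 2 * r + 1 by omega,
    show s + 1 + (m + r) - 1 = s + m + r by omega, Nat.add_sub_cancel, pow_add]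
  field_simp

lemma closedForm_succ_succ_mul {s q m : ℕ} (hs : 1 ≤ s) (hm : m ≤ q) :
    closedForm s (q + 1) (m + 1) * (m + 1) * (2 * s + 2 * q + 1) =
      (2 * s + m : ℝ) * closedForm s q m * (2 * q + 1 - m) := by
  obtain ⟨s, rfl⟩ := Nat.exists_eq_add_of_le' hs
  obtain ⟨r, rfl⟩ := Nat.exists_eq_add_of_le hm
  rw [show m + r + 1 = (m + 1) + r by ring, closedForm_succ_add, closedForm_succ_add,
    show m + 1 + 2 * r = m + 2 * r + 1 by ring,
    show 2 * s + (m + 1) + 1 = 2 * s + m + 1 + 1 by ring,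
    show 2 * s + 2 * (m + 1) + 2 * r + 1 = 2 * s + 2 * m + 2 * r + 1 + 1 + 1 by ring,
    show s + (m + 1) + r = s + m + r + 1 by ring]
  push_cast [Nat.factorial_succ]
  field_simp
  ring

lemma closedForm_succ_mul {s q m : ℕ} (hs : 1 ≤ s) (hm : m ≤ q) :
    closedForm s (q + 1) m * (2 * (q + 1 - m)) * (2 * s + 2 * q + 1) =
      (2 * q + 1 - m : ℝ) * closedForm s q m * (2 * q + 2 - m) := by
  obtain ⟨s, rfl⟩ := Nat.exists_eq_add_of_le' hs
  obtain ⟨r, rfl⟩ := Nat.exists_eq_add_of_le hm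
  rw [show m + r + 1 = m + (r + 1) by ring, closedForm_succ_add, closedForm_succ_add,
    show m + 2 * (r + 1) = m + 2 * r + 1 + 1 by ring,
    show 2 * s + 2 * m + 2 * (r + 1) + 1 = 2 * s + 2 * m + 2 * r + 1 + 1 + 1 by ring,
    show s + m + (r + 1) = s + m + r + 1 by ring]
  push_cast [Nat.factorial_succ]
  field_simp
  ring

lemma closedFormExt_natCast {s q m : ℕ} (hm : m ≤ q) :
    closedFormExt s q m = closedForm s q m := by
  rw [closedFormExt, if_pos ⟨m.cast_nonneg, by exact_mod_cast hm⟩, Int.toNat_natCast]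

lemma closedFormExt_eq_zero {s q : ℕ} {j : ℤ} (hj : j < 0 ∨ (q : ℤ) < j) :
    closedFormExt s q j = 0 :=
  if_neg (by omega)

lemma closedFormExt_succ_mul_self {s q : ℕ} (hs : 1 ≤ s) {j : ℤ} (h0 : 0 ≤ j)
    (hj : j ≤ q + 1) :
    closedFormExt s (q + 1) j * j * (2 * s + 2 * q + 1) =
      (2 * s + j - 1 : ℝ) * closedFormExt s q (j - 1) * (2 * q + 2 - j) := by
  obtain rfl | ⟨m, rfl⟩ : j = 0 ∨ ∃ m : ℕ, j = m + 1 := by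
    rcases Int.eq_ofNat_of_zero_le h0 with ⟨n, rfl⟩
    cases n <;> simp
  · simp [closedFormExt_eq_zero]
  · have hm : m ≤ q := by omega
    rw [add_sub_cancel_right, closedFormExt_natCast hm,
      show (m : ℤ) + 1 = ((m + 1 : ℕ) : ℤ) by push_cast; ring,
      closedFormExt_natCast (by omega : m + 1 ≤ q + 1)]
    push_cast
    linear_combination closedForm_succ_succ_mul hs hm

lemma closedFormExt_succ_mul {s q : ℕ} (hs : 1 ≤ s) {j : ℤ} (h0 : 0 ≤ j) (hj : j ≤ q + 1) :
    closedFormExt s (q + 1) j * (2 * (q + 1 - j)) * (2 * s + 2 * q + 1) =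
      (2 * q + 1 - j : ℝ) * closedFormExt s q j * (2 * q + 2 - j) := by
  obtain ⟨m, rfl⟩ := Int.eq_ofNat_of_zero_le h0
  obtain rfl | hm : m = q + 1 ∨ m ≤ q := by omega
  · rw [closedFormExt_eq_zero (q := q) (j := (q + 1 : ℕ)) (by omega)]
    push_cast
    ring
  · rw [closedFormExt_natCast hm, closedFormExt_natCast (by omega : m ≤ q + 1)]
    push_cast
    exact closedForm_succ_mul hs hm

lemma closedFormExt_succ {s q : ℕ} (hs : 1 ≤ s) {j : ℤ} (h0 : 0 ≤ j) (hj : j ≤ q + 1) :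
    closedFormExt s (q + 1) j * (2 * s + 2 * q + 1) =
      (2 * s + j - 1) * closedFormExt s q (j - 1) + (2 * q + 1 - j) * closedFormExt s q j := by
  have hj' : (j : ℝ) ≤ q + 1 := by exact_mod_cast hj
  refine mul_right_cancel₀ (b := (2 * q + 2 - j : ℝ)) (by linarith) ?_
  linear_combination closedFormExt_succ_mul_self hs h0 hj + closedFormExt_succ_mul hs h0 hj

theorem mergeInsertion_Ytilde_closed_form_general (t i : ℕ) (ht : 1 ≤ t)
    (Q : ℕ → ℤ → ℝ)
    (hQ : ∀ (q : ℕ) (j : ℤ), Q q j =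
      if 0 ≤ j ∧ j ≤ (q : ℤ) then
        ((2 * q - j.toNat)! : ℝ) /
            (2 ^ (q - j.toNat) * (j.toNat ! : ℝ) * ((q - j.toNat)! : ℝ)) *
          2 ^ q * ((2 * t + 2 * i + j.toNat - 1)! : ℝ) / ((2 * t + 2 * i + 2 * q - 1)! : ℝ) *
          ((t + i + q - 1)! : ℝ) / ((t + i - 1)! : ℝ)
      else 0) :
    Q 0 0 = 1 ∧
      ∀ (q : ℕ), 1 ≤ q → ∀ j : ℤ, 0 ≤ j → j ≤ (q : ℤ) →
        Q q j =
          (((2 * t + 2 * i : ℕ) : ℝ) + (j : ℝ) - 1) / ((2 * t + 2 * i + 2 * q : ℕ) - 1) *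
              Q (q - 1) (j - 1) +
            (2 * (q : ℝ) - (j : ℝ) - 1) / ((2 * t + 2 * i + 2 * q : ℕ) - 1) * Q (q - 1) j := by
  obtain rfl : Q = closedFormExt (t + i) := by
    funext q j
    rw [hQ, closedFormExt, closedForm, ← mul_add]
  refine ⟨(closedFormExt_natCast le_rfl).trans (closedForm_zero_zero _), ?_⟩
  intro q hq j h0 hj
  obtain ⟨q, rfl⟩ := Nat.exists_eq_add_of_le' hq
  have hD : (0 : ℝ) < ((2 * t + 2 * i + 2 * (q + 1) : ℕ) : ℝ) - 1 := by
    push_cast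
    linarith [(t + i + q : ℕ).cast_nonneg (α := ℝ)]
  have key := closedFormExt_succ (s := t + i) (le_add_right ht) h0 (by exact_mod_cast hj)
  rw [Nat.add_sub_cancel, div_mul_eq_mul_div, div_mul_eq_mul_div, ← add_div, eq_div_iff hD.ne']
  push_cast at key ⊢
  linear_combination key

/-- The closed form `Q q j` for `P(Ỹ_{i,q} = j)` in the MergeInsertion analysis
satisfies `Q 0 0 = 1` and the recurrence
`Q q j = ((2t+2i+j-1)/(2t+2i+2q-1))·Q (q-1) (j-1) + ((2q-j-1)/(2t+2i+2q-1))·Q (q-1) j`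
for `q ≥ 1` and `0 ≤ j ≤ q` (with the convention that `Q` vanishes outside
`0 ≤ j ≤ q`). Here `t = t_{k-1}`. -/
theorem mergeInsertion_Ytilde_closed_form (t i : ℕ) (ht : 1 ≤ t) (hi : 1 ≤ i)
    (Q : ℕ → ℤ → ℝ)
    (hQ : ∀ (q : ℕ) (j : ℤ), Q q j =
      if 0 ≤ j ∧ j ≤ (q : ℤ) then
        ((2 * q - j.toNat)! : ℝ) /
            (2 ^ (q - j.toNat) * (j.toNat ! : ℝ) * ((q - j.toNat)! : ℝ)) *
          2 ^ q * ((2 * t + 2 * i + j.toNat - 1)! : ℝ) / ((2 * t + 2 * i + 2 * q - 1)! : ℝ) *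
          ((t + i + q - 1)! : ℝ) / ((t + i - 1)! : ℝ)
      else 0) :
    Q 0 0 = 1 ∧
      ∀ (q : ℕ), 1 ≤ q → ∀ j : ℤ, 0 ≤ j → j ≤ (q : ℤ) →
        Q q j =
          (((2 * t + 2 * i : ℕ) : ℝ) + (j : ℝ) - 1) / ((2 * t + 2 * i + 2 * q : ℕ) - 1) *
              Q (q - 1) (j - 1) +
            (2 * (q : ℝ) - (j : ℝ) - 1) / ((2 * t + 2 * i + 2 * q : ℕ) - 1) * Q (q - 1) j :=
  mergeInsertion_Ytilde_closed_form_general t i ht Q hQ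
end

section
/- Fix integers t ≥ 1, i ≥ 1, q ≥ 0. Then ∑_{j=0}^{q} ((2q-j)!/(2^(q-j) · j! · (q-j)!)) · 2^q · (2t+2i+j-1)!/(2t+2i+2q-1)! · (t+i+q-1)!/(t+i-1)! = 1. -/
/-!
The sums are constant in `q` (and equal `1` at `q = 0`) by a Wilf–Zeilberger pair: with
`G q j = j / (2q + 2 - j) * F (q + 1) j`, the summand `F` satisfies
`F q j - F (q + 1) j = G q (j + 1) - G q j`. Summing over `j ≤ q` telescopes to
`G q (q + 1) = F (q + 1) (q + 1)`, the one term the shorter sum misses. The pair identity follows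
from the term ratios `F (q + 1) j / F q j` and `F q (j + 1) / F q j`, both rational in `q` and `j`.
-/

open Nat Finset

/-- The closed form `Q(q, j)` with `t + i = b + 1`; in terms of `b` no subtraction truncates. -/
noncomputable def yTildeProb (b q j : ℕ) : ℝ :=
  ((2 * q - j)! : ℝ) / (2 ^ (q - j) * (j ! : ℝ) * ((q - j)! : ℝ)) *
    2 ^ q * ((2 * b + 1 + j)! : ℝ) / ((2 * b + 1 + 2 * q)! : ℝ) *
    ((b + q)! : ℝ) / (b ! : ℝ)

lemma yTildeProb_succ_q (b q j : ℕ) (hj : j ≤ q) :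
    2 * ((q : ℝ) + 1 - j) * (2 * b + 2 * q + 3) * yTildeProb b (q + 1) j
      = (2 * (q : ℝ) + 2 - j) * (2 * q + 1 - j) * yTildeProb b q j := by
  obtain ⟨k, rfl⟩ := Nat.exists_eq_add_of_le hj
  rw [yTildeProb, yTildeProb,
    show 2 * (j + k + 1) - j = 2 * k + j + 1 + 1 by omega, show j + k + 1 - j = k + 1 by omega,
    show 2 * (j + k) - j = 2 * k + j by omega, show j + k - j = k by omega,
    show 2 * b + 1 + 2 * (j + k + 1) = 2 * b + 1 + 2 * (j + k) + 1 + 1 by omega,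
    ← add_assoc b, factorial_succ (2 * k + j + 1), factorial_succ (2 * k + j), factorial_succ k,
    factorial_succ (2 * b + 1 + 2 * (j + k) + 1), factorial_succ (2 * b + 1 + 2 * (j + k)),
    factorial_succ (b + (j + k))]
  push_cast
  field_simp
  ring

lemma yTildeProb_succ_j (b q j : ℕ) (hj : j < q) :
    ((j : ℝ) + 1) * (2 * q - j) * yTildeProb b q (j + 1)
      = 2 * ((q : ℝ) - j) * (2 * b + 2 + j) * yTildeProb b q j := by
  obtain ⟨k, rfl⟩ := Nat.exists_eq_add_of_lt hj
  rw [yTildeProb, yTildeProb,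
    show 2 * (j + k + 1) - (j + 1) = 2 * k + j + 1 by omega, show j + k + 1 - (j + 1) = k by omega,
    show 2 * (j + k + 1) - j = 2 * k + j + 1 + 1 by omega, show j + k + 1 - j = k + 1 by omega,
    ← add_assoc (2 * b + 1), factorial_succ (2 * k + j + 1), factorial_succ (2 * k + j),
    factorial_succ k, factorial_succ (2 * b + 1 + j), factorial_succ j]
  push_cast
  field_simp
  ring

noncomputable def wzCertificate (b q j : ℕ) : ℝ :=
  j / (2 * (q : ℝ) + 2 - j) * yTildeProb b (q + 1) j

lemma yTildeProb_sub_yTildeProb_succ (b q j : ℕ) (hj : j ≤ q) :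
    yTildeProb b q j - yTildeProb b (q + 1) j
      = wzCertificate b q (j + 1) - wzCertificate b q j := by
  have hjq : (j : ℝ) ≤ q := by exact_mod_cast hj
  have hratio_q := yTildeProb_succ_q b q j hj
  have hratio_j := yTildeProb_succ_j b (q + 1) j (by omega)
  have h1 : 2 * (q : ℝ) + 2 - (j + 1) ≠ 0 := by linarith
  have h2 : 2 * (q : ℝ) + 2 - j ≠ 0 := by linarith
  rw [wzCertificate, wzCertificate]
  push_cast at hratio_j ⊢
  rw [div_mul_eq_mul_div, div_mul_eq_mul_div, div_sub_div _ _ h1 h2, eq_div_iff (mul_ne_zero h1 h2)]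
  linear_combination -hratio_q - hratio_j

lemma sum_yTildeProb_succ (b q : ℕ) :
    ∑ j ∈ range (q + 2), yTildeProb b (q + 1) j = ∑ j ∈ range (q + 1), yTildeProb b q j := by
  have hlast : wzCertificate b q (q + 1) = yTildeProb b (q + 1) (q + 1) := by
    rw [wzCertificate, show 2 * (q : ℝ) + 2 - (q + 1 : ℕ) = (q + 1 : ℕ) by push_cast; ring,
      div_self (by positivity), one_mul]
  have hzero : wzCertificate b q 0 = 0 := by simp [wzCertificate]
  calc ∑ j ∈ range (q + 2), yTildeProb b (q + 1) j
      = ∑ j ∈ range (q + 1), yTildeProb b (q + 1) j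
          + (wzCertificate b q (q + 1) - wzCertificate b q 0) := by
        rw [sum_range_succ, hlast, hzero, sub_zero]
    _ = ∑ j ∈ range (q + 1), (yTildeProb b (q + 1) j
          + (wzCertificate b q (j + 1) - wzCertificate b q j)) := by
        rw [sum_add_distrib, sum_range_sub]
    _ = ∑ j ∈ range (q + 1), yTildeProb b q j := by
        refine sum_congr rfl fun j hj => ?_
        rw [← yTildeProb_sub_yTildeProb_succ b q j (Nat.lt_succ_iff.mp (mem_range.mp hj))]
        ring

lemma sum_yTildeProb (b q : ℕ) : ∑ j ∈ range (q + 1), yTildeProb b q j = 1 := by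
  induction q with
  | zero => simp [yTildeProb, (factorial_pos _).ne']
  | succ q ih => rwa [sum_yTildeProb_succ]

theorem mergeInsertion_Ytilde_sums_to_one_general (t i q : ℕ) (hi : 1 ≤ i) :
    ∑ j ∈ Finset.range (q + 1),
        ((2 * q - j)! : ℝ) / (2 ^ (q - j) * (j ! : ℝ) * ((q - j)! : ℝ)) *
          2 ^ q * ((2 * t + 2 * i + j - 1)! : ℝ) / ((2 * t + 2 * i + 2 * q - 1)! : ℝ) *
          ((t + i + q - 1)! : ℝ) / ((t + i - 1)! : ℝ) = 1 := by
  rw [← sum_yTildeProb (t + i - 1) q]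
  refine sum_congr rfl fun j _ => ?_
  rw [yTildeProb, show 2 * (t + i - 1) + 1 + j = 2 * t + 2 * i + j - 1 by omega,
    show 2 * (t + i - 1) + 1 + 2 * q = 2 * t + 2 * i + 2 * q - 1 by omega,
    show t + i - 1 + q = t + i + q - 1 by omega]

/-- The closed form for `P(Ỹ_{i,q} = j)` is a probability distribution: it sums
to `1` over `j = 0, …, q`. Here `t = t_{k-1}`. -/
theorem mergeInsertion_Ytilde_sums_to_one (t i q : ℕ) (ht : 1 ≤ t) (hi : 1 ≤ i) :
    ∑ j ∈ Finset.range (q + 1),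
        ((2 * q - j)! : ℝ) / (2 ^ (q - j) * (j ! : ℝ) * ((q - j)! : ℝ)) *
          2 ^ q * ((2 * t + 2 * i + j - 1)! : ℝ) / ((2 * t + 2 * i + 2 * q - 1)! : ℝ) *
          ((t + i + q - 1)! : ℝ) / ((t + i - 1)! : ℝ) = 1 :=
  mergeInsertion_Ytilde_sums_to_one_general t i q hi
end

section
/- Fix integers k ≥ 2 and set t_k = (2^(k+1)+(-1)^k)/3, t_{k-1} = (2^k+(-1)^(k-1))/3. For 1 ≤ i ≤ t_k - t_{k-1} and 2t_{k-1}+i-1 ≤ j ≤ 2^k - 1, define P(Y_i = j) = 2^(j - 2t_{k-1} - i + 1) · (2t_k - i - j - 1)! / ((j - 2t_{k-1} - i + 1)! · (2^k - j - 1)!) · (i+j)!/(2t_k - 1)! · (t_k - 1)!/(t_{k-1}+i-1)!. Then ∑_{j=2t_{k-1}+i-1}^{2^k-1} P(Y_i = j) = 1. -/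
/-!
Put `d = t_{k-1} + i - 1`, `N = t_k - t_{k-1} - i` and `j = 2 t_{k-1} + i - 1 + m`. Since
`t_k + t_{k-1} = 2^k`, the claim is the identity
`∑_{m + p = N} 2^m (m + 2p)! (2d + 1 + m)! / (m! p!) = (2d + 2N + 1)! d! / (d + N)!`.
Its left side `S(N, d)` satisfies `S(N + 1, d) = S(N, d + 1) / (d + 1)`: the summands telescope
against a Wilf–Zeilberger certificate, a rational function times the summand. Induction on `N`
then gives the closed form.
-/

open Nat Finset

theorem Finset.Nat.sum_antidiagonal_sub_succ {M : Type*} [AddCommGroup M] (f : ℕ → ℕ → M)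
    (n : ℕ) :
    ∑ p ∈ antidiagonal n, (f (p.1 + 1) p.2 - f p.1 (p.2 + 1)) = f (n + 1) 0 - f 0 (n + 1) := by
  rw [sum_sub_distrib, sub_eq_sub_iff_add_eq_add, add_comm]
  exact (sum_antidiagonal_succ (f := fun p ↦ f p.1 p.2)).symm.trans sum_antidiagonal_succ'

namespace MergeInsertion

theorem add_eq_two_pow_of_three_mul_eq {k a b : ℕ} (ha : (3 : ℤ) * a = 2 ^ (k + 1) + (-1) ^ k)
    (hb : (3 : ℤ) * b = 2 ^ k + (-1) ^ (k - 1)) : a + b = 2 ^ k := by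
  cases k with
  | zero => norm_num at hb; omega
  | succ k =>
    have h : (3 : ℤ) * (a + b) = 3 * 2 ^ (k + 1) := by
      rw [Nat.add_sub_cancel] at hb
      linear_combination ha + hb
    exact_mod_cast mul_left_cancel₀ three_ne_zero h

noncomputable def term (d m p : ℕ) : ℝ :=
  2 ^ m * ((m + 2 * p)! : ℝ) * ((2 * d + 1 + m)! : ℝ) / ((m ! : ℝ) * (p ! : ℝ))

noncomputable def certificate (d m p : ℕ) : ℝ :=
  m * (p - d - 1) / ((d + 1) * (m + 2 * p)) * term d m p

theorem term_sub_term_eq_certificate_sub (d m p : ℕ) :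
    term d m (p + 1) - term (d + 1) m p / (d + 1) =
      certificate d (m + 1) p - certificate d m (p + 1) := by
  unfold certificate term
  rw [show m + 1 + 2 * p = m + 2 * p + 1 by ring,
    show m + 2 * (p + 1) = m + 2 * p + 1 + 1 by ring,
    show 2 * (d + 1) + 1 + m = 2 * d + 1 + m + 1 + 1 by ring,
    show 2 * d + 1 + (m + 1) = 2 * d + 1 + m + 1 by ring]
  simp only [Nat.factorial_succ]
  push_cast
  field_simp
  ring

theorem sum_antidiagonal_term_succ (d N : ℕ) :
    ∑ p ∈ antidiagonal (N + 1), term d p.1 p.2 =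
      (∑ p ∈ antidiagonal N, term (d + 1) p.1 p.2) / (d + 1) := by
  have htelescope := Finset.Nat.sum_antidiagonal_sub_succ (certificate d) N
  simp only [← term_sub_term_eq_certificate_sub, sum_sub_distrib, ← sum_div] at htelescope
  have hfirst : certificate d (N + 1) 0 = -term d (N + 1) 0 := by
    unfold certificate
    field_simp
    push_cast
    ring
  have hlast : certificate d 0 (N + 1) = 0 := by simp [certificate]
  rw [Finset.Nat.sum_antidiagonal_succ']
  linarith

theorem sum_antidiagonal_term (N d : ℕ) :
    ∑ p ∈ antidiagonal N, term d p.1 p.2 = (2 * d + 2 * N + 1)! * d ! / (d + N)! := by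
  induction N generalizing d with
  | zero => simp [term, mul_div_assoc, (Nat.factorial_pos d).ne']
  | succ N ih =>
    rw [sum_antidiagonal_term_succ, ih,
      show 2 * (d + 1) + 2 * N + 1 = 2 * d + 2 * (N + 1) + 1 by ring,
      show d + 1 + N = d + (N + 1) by ring, Nat.factorial_succ d]
    push_cast
    field_simp

end MergeInsertion

theorem mergeInsertion_Yi_dist_sums_to_one_general (k : ℕ) (tk tk1 : ℕ)
    (htk : (3 : ℤ) * tk = 2 ^ (k + 1) + (-1) ^ k)
    (htk1 : (3 : ℤ) * tk1 = 2 ^ k + (-1) ^ (k - 1))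
    (i : ℕ) (hi₁ : 1 ≤ i) (hi₂ : i ≤ tk - tk1) :
    ∑ j ∈ Finset.Icc (2 * tk1 + i - 1) (2 ^ k - 1),
        (2 : ℝ) ^ (j + 1 - 2 * tk1 - i) *
          ((2 * tk - i - j - 1)! : ℝ) /
            (((j + 1 - 2 * tk1 - i)! : ℝ) * ((2 ^ k - j - 1)! : ℝ)) *
          ((i + j)! : ℝ) / ((2 * tk - 1)! : ℝ) *
          ((tk - 1)! : ℝ) / ((tk1 + i - 1)! : ℝ) = 1 := by
  have hsum : tk + tk1 = 2 ^ k := MergeInsertion.add_eq_two_pow_of_three_mul_eq htk htk1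
  set d := tk1 + i - 1
  set N := tk - tk1 - i
  have hlength : 2 ^ k - 1 + 1 - (2 * tk1 + i - 1) = N + 1 := by omega
  rw [← Finset.Ico_add_one_right_eq_Icc, Finset.sum_Ico_eq_sum_range, hlength]
  calc
    _ = ∑ m ∈ range (N + 1),
          MergeInsertion.term d m (N - m) / ((2 * d + 2 * N + 1)! * d ! / (d + N)!) := by
      refine sum_congr rfl fun m hm ↦ ?_
      have hm : m ≤ N := Nat.lt_succ_iff.mp (mem_range.mp hm)
      rw [show 2 * tk1 + i - 1 + m + 1 - 2 * tk1 - i = m by omega,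
        show 2 * tk - i - (2 * tk1 + i - 1 + m) - 1 = m + 2 * (N - m) by omega,
        show 2 ^ k - (2 * tk1 + i - 1 + m) - 1 = N - m by omega,
        show i + (2 * tk1 + i - 1 + m) = 2 * d + 1 + m by omega,
        show 2 * tk - 1 = 2 * d + 2 * N + 1 by omega, show tk - 1 = d + N by omega]
      unfold MergeInsertion.term
      field_simp
    _ = 1 := by
      rw [← sum_div, ← Finset.Nat.sum_antidiagonal_eq_sum_range_succ (MergeInsertion.term d),
        MergeInsertion.sum_antidiagonal_term, div_self (by positivity)]

/-- The distribution of `Y_i` (Theorem 2 of the paper): for `k ≥ 2`, with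
`t_k = (2^(k+1)+(-1)^k)/3` and `t_{k-1} = (2^k+(-1)^(k-1))/3`, and
`1 ≤ i ≤ t_k - t_{k-1}`, the probabilities `P(Y_i = j)` for
`2t_{k-1}+i-1 ≤ j ≤ 2^k-1` sum to `1`. -/
theorem mergeInsertion_Yi_dist_sums_to_one (k : ℕ) (hk : 2 ≤ k) (tk tk1 : ℕ)
    (htk : (3 : ℤ) * tk = 2 ^ (k + 1) + (-1) ^ k)
    (htk1 : (3 : ℤ) * tk1 = 2 ^ k + (-1) ^ (k - 1))
    (i : ℕ) (hi₁ : 1 ≤ i) (hi₂ : i ≤ tk - tk1) :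
    ∑ j ∈ Finset.Icc (2 * tk1 + i - 1) (2 ^ k - 1),
        (2 : ℝ) ^ (j + 1 - 2 * tk1 - i) *
          ((2 * tk - i - j - 1)! : ℝ) /
            (((j + 1 - 2 * tk1 - i)! : ℝ) * ((2 ^ k - j - 1)! : ℝ)) *
          ((i + j)! : ℝ) / ((2 * tk - 1)! : ℝ) *
          ((tk - 1)! : ℝ) / ((tk1 + i - 1)! : ℝ) = 1 :=
  mergeInsertion_Yi_dist_sums_to_one_general k tk tk1 htk htk1 i hi₁ hi₂
end

section
/- Define c : [0, 1) → ℝ by c(x) = (3 - log₂ 3) - (2 - x - 2^(1-x)) + (1 - 2^(-x)) · (3/(2^x + 1) - 1) + 2^(log₂ 3 - x)/2292. Then c(x) ≥ 1.4005 for all x ∈ [0, 1). -/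
/-!
With `s = 2 ^ (-x)` the coefficient simplifies to `6 - log₂ 3 + x - 6 / (1 + s) + s / 764`.
Put `t = 1 - s ∈ [0, 1/2]`; then `x = -log (1 - t) / log 2` is bounded below by the truncated
series `(t + t² / 2 + ⋯ + t⁶ / 6) / log 2`, which turns the claim into a degree-7 polynomial
inequality in `t`. Its minimum, about `3 · 10⁻⁴` near `t ≈ 0.33`, is certified by the
nonnegative Bernstein coefficients of the polynomial on `[0, 1/3]` and on `[1/3, 1/2]`.
-/

open Real Finset

theorem logb_two_three_lt : logb 2 3 < 1.585 := by
  rw [logb, div_lt_iff₀ (log_pos one_lt_two)]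
  linarith [log_three_lt_d9, log_two_gt_d9]

theorem sum_range_pow_div_le_neg_log_one_sub {t : ℝ} (h0 : 0 ≤ t) (h1 : t < 1) (n : ℕ) :
    ∑ i ∈ range n, t ^ (i + 1) / (i + 1) ≤ -log (1 - t) :=
  sum_le_hasSum _ (fun i _ => by positivity)
    (hasSum_pow_div_log_of_abs_lt_one (by rwa [abs_of_nonneg h0]))

theorem sum_range_pow_div_le_mul_log_two {x : ℝ} (hx : 0 ≤ x) (n : ℕ) :
    ∑ i ∈ range n, (1 - (2 : ℝ) ^ (-x)) ^ (i + 1) / (i + 1) ≤ x * log 2 := by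
  have h0 : 0 ≤ 1 - (2 : ℝ) ^ (-x) := by
    linarith [rpow_le_one_of_one_le_of_nonpos one_le_two (neg_nonpos.2 hx)]
  have h1 : 1 - (2 : ℝ) ^ (-x) < 1 := by linarith [rpow_pos_of_pos two_pos (-x)]
  calc _ ≤ -log (1 - (1 - (2 : ℝ) ^ (-x))) := sum_range_pow_div_le_neg_log_one_sub h0 h1 n
    _ = x * log 2 := by rw [sub_sub_cancel, log_rpow two_pos]; ring

theorem mergeInsertion_coeff_eq (x : ℝ) :
    (3 - logb 2 3) - (2 - x - (2 : ℝ) ^ (1 - x)) +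
        (1 - (2 : ℝ) ^ (-x)) * (3 / ((2 : ℝ) ^ x + 1) - 1) +
        (2 : ℝ) ^ (logb 2 3 - x) / 2292 =
      6 - logb 2 3 + x - 6 / (1 + (2 : ℝ) ^ (-x)) + (2 : ℝ) ^ (-x) / 764 := by
  have ha : 0 < (2 : ℝ) ^ x := rpow_pos_of_pos two_pos x
  rw [rpow_sub two_pos, rpow_sub two_pos, rpow_neg zero_le_two, rpow_one,
    rpow_logb two_pos (by norm_num) (by norm_num)]
  field_simp
  ring

theorem pow_mul_pow_nonneg_of_mem_Icc {a b t : ℝ} (ha : a ≤ t) (hb : t ≤ b) (i j : ℕ) :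
    0 ≤ (t - a) ^ i * (b - t) ^ j := by
  have : 0 ≤ t - a := sub_nonneg.2 ha
  have : 0 ≤ b - t := sub_nonneg.2 hb
  positivity

-- `3.0145 = 6 - 1.585 - 1.4005` and `1.442695 < 1 / log 2`.
theorem mergeInsertion_polynomial_bound {t : ℝ} (h0 : 0 ≤ t) (h1 : t ≤ 1 / 2) :
    6 ≤ (3.0145 + 1.442695 * (t + t ^ 2 / 2 + t ^ 3 / 3 + t ^ 4 / 4 + t ^ 5 / 5 + t ^ 6 / 6)
      + (1 - t) / 764) * (2 - t) := by
  rcases le_total t (1 / 3) with h | h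
  · have hB := pow_mul_pow_nonneg_of_mem_Icc h0 h
    simp only [sub_zero] at hB
    linarith [hB 0 7, hB 1 6, hB 2 5, hB 3 4, hB 4 3, hB 5 2, hB 6 1, hB 7 0]
  · have hB := pow_mul_pow_nonneg_of_mem_Icc h h1
    linarith [hB 0 7, hB 1 6, hB 2 5, hB 3 4, hB 4 3, hB 5 2, hB 6 1, hB 7 0]

/-- The coefficient function `c` from Theorem 3 of the paper satisfies
`c(x) ≥ 1.4005` on `[0, 1)`. -/
theorem mergeInsertion_c_lower_bound (c : ℝ → ℝ)
    (hc : ∀ x : ℝ, c x =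
      (3 - Real.logb 2 3) - (2 - x - (2 : ℝ) ^ (1 - x)) +
        (1 - (2 : ℝ) ^ (-x)) * (3 / ((2 : ℝ) ^ x + 1) - 1) +
        (2 : ℝ) ^ (Real.logb 2 3 - x) / 2292) :
    ∀ x : ℝ, 0 ≤ x → x < 1 → c x ≥ 1.4005 := by
  intro x hx0 hx1
  set t := 1 - (2 : ℝ) ^ (-x) with ht
  have ht0 : 0 ≤ t := by
    linarith [rpow_le_one_of_one_le_of_nonpos one_le_two (neg_nonpos.2 hx0)]
  have ht1 : t ≤ 1 / 2 := by
    have : (2 : ℝ) ^ (-1 : ℝ) < 2 ^ (-x) := rpow_lt_rpow_of_exponent_lt one_lt_two (by linarith)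
    norm_num at this
    linarith
  have hseries : t + t ^ 2 / 2 + t ^ 3 / 3 + t ^ 4 / 4 + t ^ 5 / 5 + t ^ 6 / 6 ≤ x * log 2 := by
    have := sum_range_pow_div_le_mul_log_two hx0 6
    norm_num [sum_range_succ] at this
    linarith
  have hx_lower : 1.442695 * (t + t ^ 2 / 2 + t ^ 3 / 3 + t ^ 4 / 4 + t ^ 5 / 5 + t ^ 6 / 6) ≤ x := by
    linarith [mul_le_mul_of_nonneg_left log_two_lt_d9.le hx0]
  have hdiv : 6 / (2 - t) ≤ 3.0145 + x + (1 - t) / 764 := by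
    have h2t : 0 ≤ 2 - t := by linarith
    rw [div_le_iff₀ (by linarith)]
    linarith [mergeInsertion_polynomial_bound ht0 ht1, mul_le_mul_of_nonneg_right hx_lower h2t]
  have hs : (2 : ℝ) ^ (-x) = 1 - t := by rw [ht]; ring
  rw [hc, mergeInsertion_coeff_eq, hs, show 1 + (1 - t) = 2 - t by ring]
  linarith [logb_two_three_lt]
end

section
/- For every integer m ≥ 2, the quantity T(m) = ⌈log₂ m⌉ + 1 - 2^(⌈log₂ m⌉)/m satisfies log₂ m ≤ T(m) ≤ log₂ m + 1 - (1 + ln(ln 2))/ln 2, and T(m) = log₂ m exactly when m is a power of 2. -/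
/-!
Write `k = ⌈log₂ m⌉` and `x = 2^k / m ∈ [1, 2)`. Since `log₂ m = k - log₂ x`, the excess
`T(m) - log₂ m` equals `1 - x + log₂ x`. On `[1, 2]` the concave function `log₂ x` lies above
its chord `x - 1`, strictly inside the interval, which gives the lower bound and its equality
case `x = 1`. The upper bound is `log y ≤ y - 1` at `y = x ln 2`, where `1 - x + log₂ x`
attains its maximum.
-/

open Real Nat

namespace Real

theorem sub_one_lt_logb_two {x : ℝ} (h1 : 1 < x) (h2 : x < 2) : x - 1 < logb 2 x := by
  have hchord := strictConcaveOn_log_Ioi.2 (Set.mem_Ioi.2 one_pos) (Set.mem_Ioi.2 two_pos)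
    (by norm_num : (1 : ℝ) ≠ 2) (show (0 : ℝ) < 2 - x by linarith)
    (show (0 : ℝ) < x - 1 by linarith) (by ring)
  simp only [smul_eq_mul, log_one, mul_zero, zero_add, mul_one] at hchord
  rw [show 2 - x + (x - 1) * 2 = x by ring] at hchord
  rw [lt_logb_iff_rpow_lt one_lt_two (by linarith), ← log_lt_log_iff (by positivity) (by linarith),
    log_rpow two_pos]
  exact hchord

theorem sub_one_le_logb_two {x : ℝ} (h1 : 1 ≤ x) (h2 : x < 2) : x - 1 ≤ logb 2 x := by
  rcases h1.eq_or_lt with rfl | h1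
  · simp
  · exact (sub_one_lt_logb_two h1 h2).le

/-- The bound is attained at `x = 1 / log b`. -/
theorem logb_le_self_sub {b x : ℝ} (hb : 1 < b) (hx : 0 < x) :
    logb b x ≤ x - (1 + log (log b)) / log b := by
  have hL : 0 < log b := log_pos hb
  have key := log_le_sub_one_of_pos (mul_pos hx hL)
  rw [log_mul hx.ne' hL.ne'] at key
  rw [logb, le_sub_iff_add_le, ← add_div, div_le_iff₀ hL]
  linarith

end Real

namespace Nat

theorem two_pow_clog_lt_two_mul {m : ℕ} (hm : 1 < m) : 2 ^ clog 2 m < 2 * m := by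
  have hpos := clog_pos one_lt_two hm
  calc 2 ^ clog 2 m = 2 * 2 ^ (clog 2 m).pred := by
        rw [← Nat.pow_succ', Nat.succ_pred_eq_of_pos hpos]
    _ < 2 * m := by linarith [pow_pred_clog_lt_self one_lt_two hm]

theorem pow_clog_eq_self_iff {b m : ℕ} (hb : 1 < b) : b ^ clog b m = m ↔ ∃ j : ℕ, m = b ^ j :=
  ⟨fun h ↦ ⟨clog b m, h.symm⟩, by rintro ⟨j, rfl⟩; rw [clog_pow b j hb]⟩

end Nat

/-- The average binary-insertion cost `T(m) = ⌈log₂ m⌉ + 1 - 2^⌈log₂ m⌉/m`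
satisfies `log₂ m ≤ T(m) ≤ log₂ m + 1 - (1 + ln ln 2)/ln 2` for all integers
`m ≥ 2`, with equality `T(m) = log₂ m` exactly when `m` is a power of `2`. -/
theorem binaryInsertion_avg_cost_bounds (m : ℕ) (hm : 2 ≤ m) :
    Real.logb 2 m ≤ (Nat.clog 2 m : ℝ) + 1 - 2 ^ Nat.clog 2 m / m ∧
      (Nat.clog 2 m : ℝ) + 1 - 2 ^ Nat.clog 2 m / m ≤
        Real.logb 2 m + 1 - (1 + Real.log (Real.log 2)) / Real.log 2 ∧
      ((Nat.clog 2 m : ℝ) + 1 - 2 ^ Nat.clog 2 m / m = Real.logb 2 m ↔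
        ∃ j : ℕ, m = 2 ^ j) := by
  set k := Nat.clog 2 m
  have hm0 : (0 : ℝ) < m := by positivity
  set x : ℝ := 2 ^ k / m with hx
  have hx1 : 1 ≤ x := (one_le_div hm0).2 (by exact_mod_cast Nat.le_pow_clog one_lt_two m)
  have hx2 : x < 2 := (div_lt_iff₀ hm0).2 (by exact_mod_cast Nat.two_pow_clog_lt_two_mul hm)
  have hlogb : logb 2 (m : ℝ) = k - logb 2 x := by
    rw [hx, logb_div (by positivity) hm0.ne', logb_pow, logb_self_eq_one one_lt_two]
    ring
  have hx_eq_one : x = 1 ↔ ∃ j : ℕ, m = 2 ^ j := by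
    rw [hx, div_eq_one_iff_eq hm0.ne', ← Nat.pow_clog_eq_self_iff one_lt_two]
    exact_mod_cast Iff.rfl
  refine ⟨?_, ?_, ?_⟩
  · linarith [sub_one_le_logb_two hx1 hx2]
  · linarith [logb_le_self_sub one_lt_two (by linarith : 0 < x)]
  · rw [← hx_eq_one]
    constructor
    · intro heq
      by_contra hne
      linarith [sub_one_lt_logb_two (lt_of_le_of_ne hx1 (Ne.symm hne)) hx2]
    · intro h1
      rw [hlogb, h1]
      simp
end

section
/- For positive integers m, let k_m be the unique integer with t_{k_m - 1} ≤ m < t_{k_m}, where t_k = (2^(k+1)+(-1)^k)/3, and let l_m = ⌊log₂(3m)⌋. Then l_m ≤ k_m, and if t_{k_m - 1} < m < t_{k_m} then k_m = l_m. -/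
open Nat

/-! Since `|(-1)^k| ≤ 1`, the integer `3 t_k` lies within `1` of `2^(k+1)`, whereas `3m` is
a multiple of `3`. Hence `m < t_k` forces `3m ≤ 3 t_k - 3 < 2^(k+1)`, and `t_k < m` forces
`2^(k+1) < 3 t_k + 3 ≤ 3m`; taking `Nat.log 2` gives the two bounds on `⌊log₂(3m)⌋`. -/

namespace MergeInsertion

variable {t : ℕ → ℤ} {m k : ℕ}

theorem three_mul_lt_two_pow_of_lt (ht : ∀ j : ℕ, 3 * t j = 2 ^ (j + 1) + (-1) ^ j)
    (h : (m : ℤ) < t k) : 3 * m < 2 ^ (k + 1) := by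
  have hsign := (abs_le.mp (abs_neg_one_pow (α := ℤ) k).le).2
  have := ht k
  zify
  omega

theorem two_pow_le_three_mul_of_lt (ht : ∀ j : ℕ, 3 * t j = 2 ^ (j + 1) + (-1) ^ j)
    (h : t k < (m : ℤ)) : 2 ^ (k + 1) ≤ 3 * m := by
  have hsign := (abs_le.mp (abs_neg_one_pow (α := ℤ) k).le).1
  have := ht k
  zify
  omega

theorem log_three_mul_le_of_lt (ht : ∀ j : ℕ, 3 * t j = 2 ^ (j + 1) + (-1) ^ j)
    (h : (m : ℤ) < t k) : Nat.log 2 (3 * m) ≤ k :=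
  Nat.lt_succ_iff.mp <|
    Nat.log_lt_of_lt_pow' k.succ_ne_zero (three_mul_lt_two_pow_of_lt ht h)

theorem lt_log_three_mul_of_lt (ht : ∀ j : ℕ, 3 * t j = 2 ^ (j + 1) + (-1) ^ j)
    (h : t k < (m : ℤ)) : k < Nat.log 2 (3 * m) :=
  Nat.le_log_of_pow_le one_lt_two (two_pow_le_three_mul_of_lt ht h)

end MergeInsertion

theorem mergeInsertion_batch_index_vs_log_general (t : ℕ → ℤ)
    (ht : ∀ k : ℕ, 3 * t k = 2 ^ (k + 1) + (-1) ^ k)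
    (m km : ℕ) (h₂ : (m : ℤ) < t km) :
    Nat.log 2 (3 * m) ≤ km ∧ (t (km - 1) < (m : ℤ) → km = Nat.log 2 (3 * m)) := by
  have hupper := MergeInsertion.log_three_mul_le_of_lt ht h₂
  refine ⟨hupper, fun hlower => ?_⟩
  have hbelow := MergeInsertion.lt_log_three_mul_of_lt ht hlower
  -- `km - 1 + 1` is truncated but still at least `km`, also when `km = 0`
  omega

/-- For `m ≥ 1`, if `k_m` is the (unique) index with `t_{k_m-1} ≤ m < t_{k_m}`
(where `t_k = (2^(k+1)+(-1)^k)/3`), and `l_m = ⌊log₂(3m)⌋`, then `l_m ≤ k_m`,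
and if moreover `t_{k_m-1} < m` then `k_m = l_m`. -/
theorem mergeInsertion_batch_index_vs_log (t : ℕ → ℤ)
    (ht : ∀ k : ℕ, 3 * t k = 2 ^ (k + 1) + (-1) ^ k)
    (m km : ℕ) (hm : 1 ≤ m) (hkm : 2 ≤ km)
    (h₁ : t (km - 1) ≤ (m : ℤ)) (h₂ : (m : ℤ) < t km) :
    Nat.log 2 (3 * m) ≤ km ∧ (t (km - 1) < (m : ℤ) → km = Nat.log 2 (3 * m)) :=
  mergeInsertion_batch_index_vs_log_general t ht m km h₂
end

section
/- Let k ≥ 2, t = t_{k-1} = (2^k + (-1)^{k-1})/3, and for i ≥ 1 let P(X_i = 2t + i - 1) = 1/(2t + 2i - 1) and P(X_i = j) = ((2t+2i-2)/(2t+2i-1)) · P(X_{i-1} = j) for 0 ≤ j < 2t + i - 1, with P(X_1 = j) = 1/(2t+1) for 0 ≤ j ≤ 2t. Then P(X_i = j) is constant in j for 0 ≤ j ≤ 2t, and P(X_i = j) is non-increasing in j for each fixed i. -/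
open Set

/-! Write `m = 2t`. Passing from `X_{i-1}` to `X_i` multiplies every old position by the same
ratio `(m+2i-2)/(m+2i-1)`, so constancy on the first `m+1` positions propagates, and so does
antitonicity, except at the new last position `m+i-1`. Its mass `1/(m+2i-1)` is at most the
rescaled old last mass `(m+2i-2)/(m+2i-1) · 1/(m+2i-3)`, and by induction that old last mass is
the minimum of the old distribution. -/

/-- The recurrence for `P(X_i = j)`, with `m = 2t` and the index shifted so that no
natural-number subtraction occurs. -/
structure InsertionRecurrence (m : ℕ) (P : ℕ → ℕ → ℝ) : Prop where
  base : ∀ j ≤ m, P 1 j = 1 / ((m : ℝ) + 1)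
  top : ∀ i ≥ 1, P (i + 1) (m + i) = 1 / ((m : ℝ) + 2 * i + 1)
  step : ∀ i ≥ 1, ∀ j < m + i,
    P (i + 1) j = ((m : ℝ) + 2 * i) / ((m : ℝ) + 2 * i + 1) * P i j

theorem antitoneOn_Iic_succ_of_le {α : Type*} [Preorder α] {f : ℕ → α} {N : ℕ}
    (hf : AntitoneOn f (Iic N)) (hN : f (N + 1) ≤ f N) : AntitoneOn f (Iic (N + 1)) := by
  intro a ha b hb hab
  rcases Nat.lt_or_eq_of_le (mem_Iic.mp hb) with hbN | rfl
  · exact hf (mem_Iic.mpr (by omega)) (mem_Iic.mpr (by omega)) hab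
  · rcases Nat.lt_or_eq_of_le hab with haN | rfl
    · exact hN.trans (hf (mem_Iic.mpr (by omega)) (mem_Iic.mpr le_rfl) (by omega))
    · exact le_rfl

theorem one_div_add_two_le_div_mul_one_div {a : ℝ} (ha : 0 < a) :
    1 / (a + 2) ≤ (a + 1) / (a + 2) * (1 / a) := by
  rw [_root_.div_mul_div_comm, mul_one, div_le_div_iff₀ (by positivity) (by positivity)]
  nlinarith

namespace InsertionRecurrence

variable {m : ℕ} {P : ℕ → ℕ → ℝ}

theorem apply_last (h : InsertionRecurrence m P) (i : ℕ) :
    P (i + 1) (m + i) = 1 / ((m : ℝ) + 2 * i + 1) := by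
  rcases Nat.eq_zero_or_pos i with rfl | hi
  · simpa using h.base m le_rfl
  · exact h.top i hi

theorem eq_of_le (h : InsertionRecurrence m P) (i : ℕ) {j₁ j₂ : ℕ} (h₁ : j₁ ≤ m)
    (h₂ : j₂ ≤ m) : P (i + 1) j₁ = P (i + 1) j₂ := by
  induction i with
  | zero => rw [h.base j₁ h₁, h.base j₂ h₂]
  | succ i ih => rw [h.step _ (by omega) j₁ (by omega), h.step _ (by omega) j₂ (by omega), ih]

theorem antitoneOn (h : InsertionRecurrence m P) (i : ℕ) :
    AntitoneOn (P (i + 1)) (Iic (m + i)) := by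
  induction i with
  | zero => exact fun a ha b hb _ => (h.eq_of_le 0 hb ha).le
  | succ i ih =>
    have hlast : 1 / ((m : ℝ) + 2 * (i + 1 : ℕ) + 1) ≤
        ((m : ℝ) + 2 * (i + 1 : ℕ)) / ((m : ℝ) + 2 * (i + 1 : ℕ) + 1) *
          (1 / ((m : ℝ) + 2 * i + 1)) := by
      convert one_div_add_two_le_div_mul_one_div
        (show (0 : ℝ) < m + 2 * i + 1 by positivity) using 2 <;> (push_cast; ring)
    set r : ℝ := ((m : ℝ) + 2 * (i + 1 : ℕ)) / ((m : ℝ) + 2 * (i + 1 : ℕ) + 1)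
    have hr : 0 ≤ r := by positivity
    have hrec : ∀ j ≤ m + i, P (i + 2) j = r * P (i + 1) j :=
      fun j hj => h.step (i + 1) (by omega) j (by omega)
    rw [← add_assoc]
    refine antitoneOn_Iic_succ_of_le (fun a ha b hb hab => ?_) ?_
    · rw [hrec a ha, hrec b hb]
      exact mul_le_mul_of_nonneg_left (ih ha hb hab) hr
    · rwa [hrec _ le_rfl, h.apply_last i, add_assoc m, h.apply_last (i + 1)]

end InsertionRecurrence

theorem mergeInsertion_Xi_monotone_general (t : ℕ)
    (P : ℕ → ℕ → ℝ)
    (hbase : ∀ j : ℕ, j ≤ 2 * t → P 1 j = 1 / (2 * (t : ℝ) + 1))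
    (htop : ∀ i : ℕ, 2 ≤ i → P i (2 * t + i - 1) = 1 / (2 * (t : ℝ) + 2 * i - 1))
    (hrec : ∀ i : ℕ, 2 ≤ i → ∀ j : ℕ, j < 2 * t + i - 1 →
      P i j = ((2 * (t : ℝ) + 2 * i - 2) / (2 * (t : ℝ) + 2 * i - 1)) * P (i - 1) j) :
    (∀ i : ℕ, 1 ≤ i → ∀ j₁ j₂ : ℕ, j₁ ≤ 2 * t → j₂ ≤ 2 * t → P i j₁ = P i j₂) ∧
      (∀ i : ℕ, 1 ≤ i → ∀ j₁ j₂ : ℕ, j₁ ≤ j₂ → j₂ ≤ 2 * t + i - 1 →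
        P i j₂ ≤ P i j₁) := by
  have h : InsertionRecurrence (2 * t) P := by
    refine ⟨fun j hj => ?_, fun i hi => ?_, fun i hi j hj => ?_⟩
    · rw [hbase j hj]; push_cast; rfl
    · rw [show 2 * t + i = 2 * t + (i + 1) - 1 by omega, htop (i + 1) (by omega)]
      push_cast; ring
    · rw [hrec (i + 1) (by omega) j (by omega), Nat.add_sub_cancel]
      push_cast; ring
  refine ⟨fun i hi j₁ j₂ h₁ h₂ => ?_, fun i hi j₁ j₂ h₁₂ h₂ => ?_⟩ <;>
    obtain ⟨n, rfl⟩ := Nat.exists_eq_add_of_le' hi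
  · exact h.eq_of_le n h₁ h₂
  · exact h.antitoneOn n (mem_Iic.mpr (by omega)) (mem_Iic.mpr h₂) h₁₂

/-- Properties of the position distribution `P(X_i = j)` in batch `k` of
MergeInsertion (with `t = t_{k-1}`): defined by `P(X_1 = j) = 1/(2t+1)` for
`j ≤ 2t`, `P(X_i = 2t+i-1) = 1/(2t+2i-1)` and
`P(X_i = j) = ((2t+2i-2)/(2t+2i-1))·P(X_{i-1} = j)` for `j < 2t+i-1`, it is
constant in `j` on `0 ≤ j ≤ 2t` and non-increasing in `j` (on the support
`0 ≤ j ≤ 2t+i-1`) for each fixed `i`. -/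
theorem mergeInsertion_Xi_monotone (k : ℕ) (hk : 2 ≤ k) (t : ℕ)
    (ht : (3 : ℤ) * t = 2 ^ k + (-1) ^ (k - 1))
    (P : ℕ → ℕ → ℝ)
    (hbase : ∀ j : ℕ, j ≤ 2 * t → P 1 j = 1 / (2 * (t : ℝ) + 1))
    (htop : ∀ i : ℕ, 2 ≤ i → P i (2 * t + i - 1) = 1 / (2 * (t : ℝ) + 2 * i - 1))
    (hrec : ∀ i : ℕ, 2 ≤ i → ∀ j : ℕ, j < 2 * t + i - 1 →
      P i j = ((2 * (t : ℝ) + 2 * i - 2) / (2 * (t : ℝ) + 2 * i - 1)) * P (i - 1) j) :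
    (∀ i : ℕ, 1 ≤ i → ∀ j₁ j₂ : ℕ, j₁ ≤ 2 * t → j₂ ≤ 2 * t → P i j₁ = P i j₂) ∧
      (∀ i : ℕ, 1 ≤ i → ∀ j₁ j₂ : ℕ, j₁ ≤ j₂ → j₂ ≤ 2 * t + i - 1 →
        P i j₂ ≤ P i j₁) :=
  mergeInsertion_Xi_monotone_general t P hbase htop hrec
end

section
/- Suppose the number of comparisons of a sorting algorithm satisfies F(n) = ⌊n/2⌋ + F(⌊n/2⌋) + G(⌈n/2⌉) with F(1) = 0, and suppose G(m) ≤ k_m·(m - t_{k_m - 1}) + ∑_{1 ≤ k < k_m} k·(t_k - t_{k-1}) where t_k = (2^(k+1)+(-1)^k)/3 and t_{k_m - 1} ≤ m < t_{k_m}. Then F(n) ≤ n log₂ n - (3 - log₂ 3)·n + n·(y + 1 - 2^y) + O(log n), where y = ⌈log₂(3n/4)⌉ - log₂(3n/4) ∈ [0, 1). -/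
/-!
Put `W = ⌈log₂(3n/4)⌉` and `Φ(n) = nW - (4/3)·2^W`; the claimed right-hand side is exactly
`Φ(n) + C log₂ n`. The sequence `V ↦ nV - (4/3)·2^V` is concave and its increments
`n - (4/3)·2^V` change sign at `V = W`, so `Φ(n)` is its maximum over all `V`.

By Abel summation Knuth's insertion bound for bracket `k` equals `k·m - ∑_{j<k} t_j`, which is at
most `m(k-1) - (4/3)·2^(k-1) + m + 2/3 ≤ Φ(m) + m + 2/3`, whatever `k` is. The maximum
description also gives `Φ(⌊n/2⌋) + Φ(⌈n/2⌉) + n ≤ Φ(n) + 1/2`: the exponents of the two halves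
differ by at most one, and when they differ the left side is the mean of two competitors for
`Φ(n)` plus `1/2`. Hence `F - Φ` grows by at most `7/6` each time `n` is halved.
-/

open Nat Real Finset

def clogThreeQuarters (n : ℕ) : ℕ := Nat.clog 2 (3 * n) - 2

theorem clogThreeQuarters_spec {n : ℕ} (hn : 1 ≤ n) :
    2 ^ (clogThreeQuarters n + 1) < 3 * n ∧ 3 * n ≤ 2 ^ (clogThreeQuarters n + 2) := by
  have hlt := Nat.pow_pred_clog_lt_self one_lt_two (x := 3 * n) (by omega)
  have hle := Nat.le_pow_clog one_lt_two (3 * n)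
  have h2 : 2 ≤ Nat.clog 2 (3 * n) := by
    by_contra! h
    interval_cases Nat.clog 2 (3 * n) <;> simp at hle <;> omega
  obtain ⟨k, hk⟩ := Nat.exists_eq_add_of_le' h2
  unfold clogThreeQuarters
  rw [hk] at hlt hle ⊢
  exact ⟨hlt, hle⟩

theorem clogThreeQuarters_le_add_one {m m' : ℕ} (h : m' ≤ 2 * m) (hm : 1 ≤ m) :
    clogThreeQuarters m' ≤ clogThreeQuarters m + 1 := by
  have := (clogThreeQuarters_spec hm).2
  have hc : Nat.clog 2 (3 * m') ≤ clogThreeQuarters m + 3 :=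
    Nat.clog_le_of_le_pow (by rw [pow_succ]; omega)
  unfold clogThreeQuarters at hc ⊢
  omega

theorem sub_mul_le_two_pow_sub_two_pow {s : ℝ} {W : ℕ} (h₁ : 2 ^ W ≤ 2 * s) (h₂ : s ≤ 2 ^ W)
    (V : ℕ) : ((V : ℝ) - W) * s ≤ 2 ^ V - 2 ^ W := by
  rcases le_total W V with hWV | hVW
  · induction V, hWV using Nat.le_induction with
    | base => simp
    | succ V hWV ih =>
      have : (2 : ℝ) ^ W ≤ 2 ^ V := pow_le_pow_right₀ one_le_two hWV
      push_cast
      linarith [pow_succ (2 : ℝ) V]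
  · induction hVW using Nat.decreasingInduction with
    | self => simp
    | of_succ V hVW ih =>
      have : (2 : ℝ) ^ (V + 1) ≤ 2 ^ W := pow_le_pow_right₀ one_le_two hVW
      push_cast at ih
      linarith [pow_succ (2 : ℝ) V]

noncomputable def knuthBound (V : ℕ) (x : ℝ) : ℝ := x * V - 4 / 3 * 2 ^ V

noncomputable def knuthPotential (n : ℕ) : ℝ := knuthBound (clogThreeQuarters n) n

theorem knuthBound_le_knuthPotential (V : ℕ) {n : ℕ} (hn : 1 ≤ n) :
    knuthBound V n ≤ knuthPotential n := by
  obtain ⟨h₁, h₂⟩ := clogThreeQuarters_spec hn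
  set W := clogThreeQuarters n
  have h₁' : (2 : ℝ) ^ W * 2 < 3 * n := by rw [← pow_succ]; exact_mod_cast h₁
  have h₂' : (3 : ℝ) * n ≤ 2 ^ W * 4 := by
    rw [show (4 : ℝ) = 2 ^ 2 by norm_num, ← pow_add]; exact_mod_cast h₂
  have := sub_mul_le_two_pow_sub_two_pow (s := 3 * n / 4) (W := W) (by linarith) (by linarith) V
  unfold knuthPotential knuthBound
  linarith

theorem knuthPotential_add_le {m m' : ℕ} (hm : 1 ≤ m) (h : m ≤ m') (h' : m' ≤ m + 1) :
    knuthPotential m + knuthPotential m' + (m + m' : ℕ) ≤ knuthPotential (m + m') + 1 / 2 := by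
  obtain ⟨a, ha⟩ : ∃ a, clogThreeQuarters m = a := ⟨_, rfl⟩
  have hmono : a ≤ clogThreeQuarters m' :=
    ha ▸ Nat.sub_le_sub_right (Nat.clog_mono_right 2 (by omega)) 2
  have hstep : clogThreeQuarters m' ≤ a + 1 := ha ▸ clogThreeQuarters_le_add_one (by omega) hm
  have h₁ := knuthBound_le_knuthPotential (a + 1) (n := m + m') (by omega)
  have h₂ := knuthBound_le_knuthPotential (a + 2) (n := m + m') (by omega)
  have hm' : (m' : ℝ) ≤ m + 1 := by exact_mod_cast h'
  obtain hW | hW : clogThreeQuarters m' = a ∨ clogThreeQuarters m' = a + 1 := by omega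
  all_goals
    simp only [knuthPotential, knuthBound, ha, hW] at *
    push_cast at *
  · linarith [pow_succ (2 : ℝ) a]
  · linarith [pow_succ (2 : ℝ) a, pow_succ (2 : ℝ) (a + 1)]

theorem sum_Icc_mul_sub_eq (t : ℕ → ℝ) (K : ℕ) :
    ∑ k ∈ Icc 1 K, (k : ℝ) * (t k - t (k - 1)) = K * t K - ∑ k ∈ range K, t k := by
  induction K with
  | zero => simp
  | succ K ih =>
    rw [Finset.sum_Icc_succ_top (by omega), ih, Finset.sum_range_succ, Nat.add_sub_cancel]
    push_cast
    ring

noncomputable def insertionCost (t : ℕ → ℕ) (km m : ℕ) : ℝ :=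
  (km : ℝ) * ((m : ℝ) - (t (km - 1) : ℝ)) +
    ∑ k ∈ Icc 1 (km - 1), (k : ℝ) * ((t k : ℝ) - (t (k - 1) : ℝ))

theorem insertionCost_eq (t : ℕ → ℕ) {km : ℕ} (hkm : 1 ≤ km) (m : ℕ) :
    insertionCost t km m = km * m - ∑ k ∈ range km, (t k : ℝ) := by
  obtain ⟨K, rfl⟩ := Nat.exists_eq_add_of_le' hkm
  rw [insertionCost, sum_Icc_mul_sub_eq (fun k ↦ (t k : ℝ)), Finset.sum_range_succ,
    Nat.add_sub_cancel]
  push_cast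
  ring

theorem two_pow_sub_two_le_three_mul_sum {t : ℕ → ℕ}
    (ht : ∀ k : ℕ, (3 : ℤ) * t k = 2 ^ (k + 1) + (-1) ^ k) (K : ℕ) :
    (2 : ℝ) ^ (K + 1) - 2 ≤ 3 * ∑ k ∈ range K, (t k : ℝ) := by
  have htR : ∀ k, (3 : ℝ) * t k = 2 * 2 ^ k + (-1) ^ k := fun k ↦ by
    rw [← _root_.pow_succ']; exact_mod_cast ht k
  have hgeom : ∑ k ∈ range K, (2 : ℝ) ^ k = 2 ^ K - 1 := by
    rw [geom_sum_eq (by norm_num)]; norm_num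
  have halt : 0 ≤ ∑ k ∈ range K, (-1 : ℝ) ^ k := by
    rw [neg_one_geom_sum]; split_ifs <;> norm_num
  rw [Finset.mul_sum, Finset.sum_congr rfl fun k _ ↦ htR k, Finset.sum_add_distrib,
    ← Finset.mul_sum, hgeom, _root_.pow_succ']
  linarith

theorem insertionCost_le {t : ℕ → ℕ} (ht : ∀ k : ℕ, (3 : ℤ) * t k = 2 ^ (k + 1) + (-1) ^ k)
    {km : ℕ} (hkm : 1 ≤ km) (m : ℕ) :
    insertionCost t km m ≤ knuthBound (km - 1) m + m + 2 / 3 := by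
  obtain ⟨K, rfl⟩ := Nat.exists_eq_add_of_le' hkm
  have := two_pow_sub_two_le_three_mul_sum ht (K + 1)
  rw [insertionCost_eq t hkm, knuthBound, Nat.add_sub_cancel]
  push_cast
  linarith [show (2 : ℝ) ^ (K + 1 + 1) = 4 * 2 ^ K by ring]

theorem exists_apply_pred_le_lt {t : ℕ → ℕ} {m : ℕ} (h₀ : t 0 ≤ m) (h : ∃ k, m < t k) :
    ∃ km, 1 ≤ km ∧ t (km - 1) ≤ m ∧ m < t km := by
  have hpos : Nat.find h ≠ 0 := fun h' ↦ by
    have := Nat.find_spec h; rw [h'] at this; omega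
  exact ⟨Nat.find h, Nat.one_le_iff_ne_zero.2 hpos,
    not_lt.1 (Nat.find_min h (by omega)), Nat.find_spec h⟩

theorem le_knuthPotential_add_of_le_insertionCost {t : ℕ → ℕ}
    (ht : ∀ k : ℕ, (3 : ℤ) * t k = 2 ^ (k + 1) + (-1) ^ k) {G : ℕ → ℝ}
    (hG : ∀ m : ℕ, 1 ≤ m → ∀ km : ℕ, 1 ≤ km → t (km - 1) ≤ m → m < t km →
      G m ≤ insertionCost t km m) {m : ℕ} (hm : 1 ≤ m) :
    G m ≤ knuthPotential m + m + 2 / 3 := by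
  have ht₀ : t 0 ≤ m := by have := ht 0; norm_num at this; omega
  have hunbounded : m < t (m + 1) := by
    have h₁ := ht (m + 1)
    have h₂ : (m : ℤ) < 2 ^ m := by exact_mod_cast Nat.lt_two_pow_self
    rcases neg_one_pow_eq_or ℤ (m + 1) with h | h <;>
      rw [h, show (2 : ℤ) ^ (m + 1 + 1) = 4 * 2 ^ m by ring] at h₁ <;> omega
  obtain ⟨km, hkm, hle, hlt⟩ := exists_apply_pred_le_lt ht₀ ⟨_, hunbounded⟩
  calc G m ≤ insertionCost t km m := hG m hm km hkm hle hlt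
    _ ≤ knuthBound (km - 1) m + m + 2 / 3 := insertionCost_le ht hkm m
    _ ≤ knuthPotential m + m + 2 / 3 := by
      gcongr; exact knuthBound_le_knuthPotential _ hm

theorem le_add_mul_log_of_le_div_two_add {u : ℕ → ℝ} {c : ℝ}
    (h : ∀ n, 2 ≤ n → u n ≤ u (n / 2) + c) {n : ℕ} (hn : 1 ≤ n) :
    u n ≤ u 1 + c * Nat.log 2 n := by
  induction n using Nat.strong_induction_on with
  | _ n ih =>
    rcases hn.eq_or_lt with rfl | hn
    · simp
    have hlog : 1 ≤ Nat.log 2 n := Nat.le_log_of_pow_le one_lt_two (by omega)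
    have := ih (n / 2) (by omega) (by omega)
    rw [Nat.log_div_base, Nat.cast_sub hlog] at this
    linarith [h n hn]

theorem ceil_logb_three_mul_div_four {n : ℕ} (hn : 1 ≤ n) :
    ⌈logb 2 (3 * n / 4)⌉ = (clogThreeQuarters n : ℤ) := by
  obtain ⟨h₁, h₂⟩ := clogThreeQuarters_spec hn
  have h₁' : (2 : ℝ) ^ clogThreeQuarters n * 2 < 3 * n := by
    rw [← pow_succ]; exact_mod_cast h₁
  have h₂' : (3 : ℝ) * n ≤ 2 ^ clogThreeQuarters n * 4 := by
    rw [show (4 : ℝ) = 2 ^ 2 by norm_num, ← pow_add]; exact_mod_cast h₂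
  have hx : (0 : ℝ) < 3 * n / 4 := by positivity
  rw [Int.ceil_eq_iff, Int.cast_natCast, Real.lt_logb_iff_rpow_lt one_lt_two hx,
    Real.logb_le_iff_le_rpow one_lt_two hx, Real.rpow_sub two_pos, Real.rpow_natCast,
    Real.rpow_one]
  constructor <;> linarith

theorem logb_expression_eq {x : ℝ} (hx : 0 < x) (c : ℝ) :
    x * logb 2 x - (3 - logb 2 3) * x +
      x * ((c - logb 2 (3 * x / 4)) + 1 - (2 : ℝ) ^ (c - logb 2 (3 * x / 4))) =
    x * c - 4 / 3 * (2 : ℝ) ^ c := by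
  have hlog : logb 2 (3 * x / 4) = logb 2 3 + logb 2 x - 2 := by
    rw [Real.logb_div (by positivity) (by norm_num), Real.logb_mul (by norm_num) hx.ne',
      show (4 : ℝ) = 2 ^ (2 : ℕ) by norm_num, Real.logb_pow, Real.logb_self_eq_one one_lt_two]
    ring
  rw [Real.rpow_sub two_pos, Real.rpow_logb two_pos (by norm_num) (by positivity), hlog]
  field_simp
  ring

/-- Knuth's worst-case bound for MergeInsertion: if the comparison count
satisfies `F(n) = ⌊n/2⌋ + F(⌊n/2⌋) + G(⌈n/2⌉)` with `F(1) = 0`, and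
`G(m) ≤ k_m·(m - t_{k_m-1}) + ∑_{1 ≤ k < k_m} k·(t_k - t_{k-1})` whenever
`t_{k_m-1} ≤ m < t_{k_m}` (with `t_k = (2^(k+1)+(-1)^k)/3`), then
`F(n) ≤ n log₂ n - (3 - log₂ 3)·n + n·(y + 1 - 2^y) + O(log n)`, where
`y = ⌈log₂(3n/4)⌉ - log₂(3n/4)`. -/
theorem mergeInsertion_worst_case_bound (t : ℕ → ℕ)
    (ht : ∀ k : ℕ, (3 : ℤ) * t k = 2 ^ (k + 1) + (-1) ^ k)
    (F G : ℕ → ℝ) (hF1 : F 1 = 0)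
    (hFrec : ∀ n : ℕ, 2 ≤ n → F n = ((n / 2 : ℕ) : ℝ) + F (n / 2) + G ((n + 1) / 2))
    (hG : ∀ m : ℕ, 1 ≤ m → ∀ km : ℕ, 1 ≤ km → t (km - 1) ≤ m → m < t km →
      G m ≤ (km : ℝ) * ((m : ℝ) - (t (km - 1) : ℝ)) +
        ∑ k ∈ Finset.Icc 1 (km - 1), (k : ℝ) * ((t k : ℝ) - (t (k - 1) : ℝ))) :
    ∃ C : ℝ, 0 ≤ C ∧ ∀ n : ℕ, 2 ≤ n →
      F n ≤ (n : ℝ) * Real.logb 2 n - (3 - Real.logb 2 3) * n +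
        (n : ℝ) * ((((⌈Real.logb 2 (3 * n / 4)⌉ : ℤ) : ℝ) - Real.logb 2 (3 * n / 4)) + 1 -
          (2 : ℝ) ^ (((⌈Real.logb 2 (3 * n / 4)⌉ : ℤ) : ℝ) - Real.logb 2 (3 * n / 4))) +
        C * Real.logb 2 n := by
  have hstep : ∀ n, 2 ≤ n →
      F n - knuthPotential n ≤ F (n / 2) - knuthPotential (n / 2) + 7 / 6 := by
    intro n hn
    have hsplit : n / 2 + (n + 1) / 2 = n := by omega
    have hsub := knuthPotential_add_le (m := n / 2) (m' := (n + 1) / 2) (by omega) (by omega)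
      (by omega)
    have hins := le_knuthPotential_add_of_le_insertionCost ht hG (m := (n + 1) / 2) (by omega)
    have hcast : ((n / 2 : ℕ) : ℝ) + ((n + 1) / 2 : ℕ) = n := by exact_mod_cast hsplit
    rw [hsplit] at hsub
    rw [hFrec n hn]
    linarith
  have hF1' : F 1 - knuthPotential 1 = 4 / 3 := by
    rw [hF1, knuthPotential, show clogThreeQuarters 1 = 0 by decide, knuthBound]
    norm_num
  refine ⟨5 / 2, by norm_num, fun n hn ↦ ?_⟩
  have hE := le_add_mul_log_of_le_div_two_add hstep (n := n) (by omega)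
  have hlog : (Nat.log 2 n : ℝ) ≤ logb 2 n := by exact_mod_cast natLog_le_logb n 2
  have hone : 1 ≤ logb 2 n := by
    rw [Real.le_logb_iff_rpow_le one_lt_two (by positivity), Real.rpow_one]
    exact_mod_cast hn
  rw [ceil_logb_three_mul_div_four (by omega), Int.cast_natCast,
    logb_expression_eq (by positivity), Real.rpow_natCast]
  change F n ≤ knuthPotential n + _
  linarith
end
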